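/- Let (X, μ, ω) be a σ-finite setting, r ∈ (0,∞), p ∈ (0,∞], and f ∈ L^{p,∞}_μ(ℓ^r_ω) with f not ω-a.e. zero. There exists a constant C = C(p, r) such that ‖f‖_{L^∞_μ(ℓ^r_ω)} ≤ C · sup{μ(A)^{-1}·‖f·1_A‖_{L^{1,∞}_μ(ℓ^r_ω)} : A measurable, 0 < μ(A) < ∞}. -/

import Mathlib

open MeasureTheory ENNReal Set Filter

variable {X : Type*} [MeasurableSpace X]

/-- A σ-finite setting: a σ-finite measure `ω` and a σ-finite outer measure `μ`
such that `μ`-null sets are `ω`-null. -/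
structure SigmaFiniteSetting (μ : MeasureTheory.OuterMeasure X)
    (ω : MeasureTheory.Measure X) : Prop where
  omega_sf : SigmaFinite ω
  mu_sf : ∃ B : ℕ → Set X, (⋃ n, B n) = Set.univ ∧ ∀ n, μ (B n) ≠ ∞
  ac : ∀ A : Set X, μ A = 0 → ω A = 0

/-- The generating collection `Σ_μ` of measurable sets with `μ(A) ∉ {0,∞}`. -/
def goodSets (μ : MeasureTheory.OuterMeasure X) : Set (Set X) :=
  {A | MeasurableSet A ∧ μ A ≠ 0 ∧ μ A ≠ ∞}

/-- The size `ℓ^r_ω(f)(A) = μ(A)^{-1/r} ‖f 1_A‖_{L^r(ω)}`. -/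
noncomputable def ellr (μ : MeasureTheory.OuterMeasure X) (ω : MeasureTheory.Measure X)
    (r : ℝ) (f : X → ℝ≥0∞) (A : Set X) : ℝ≥0∞ :=
  μ A ^ (-(1/r)) * (∫⁻ x in A, f x ^ r ∂ω) ^ (1/r)

/-- The size `ℓ^∞_ω(f)(A) = ‖f 1_A‖_{L^∞(ω)}`. -/
noncomputable def ellInfty (ω : MeasureTheory.Measure X) (f : X → ℝ≥0∞) (A : Set X) : ℝ≥0∞ :=
  essSup (A.indicator f) ω

/-- `ℓ^r_ω` for `r ∈ (0,∞]`. -/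
noncomputable def ellre (μ : MeasureTheory.OuterMeasure X) (ω : MeasureTheory.Measure X)
    (r : ℝ≥0∞) : (X → ℝ≥0∞) → Set X → ℝ≥0∞ :=
  if r = ∞ then ellInfty ω else ellr μ ω r.toReal

/-- The outer `L^∞_μ(S)` quasi-norm: `sup_{A ∈ 𝒜} S(f)(A)`. -/
noncomputable def outLinf (𝒜 : Set (Set X))
    (S : (X → ℝ≥0∞) → Set X → ℝ≥0∞) (f : X → ℝ≥0∞) : ℝ≥0∞ :=
  ⨆ A ∈ 𝒜, S f A

/-- The super level measure `μ(S(f) > l)`. -/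
noncomputable def slm (μ : MeasureTheory.OuterMeasure X) (𝒜 : Set (Set X))
    (S : (X → ℝ≥0∞) → Set X → ℝ≥0∞) (f : X → ℝ≥0∞) (l : ℝ≥0∞) : ℝ≥0∞ :=
  ⨅ (E : Set X) (_ : MeasurableSet E) (_ : outLinf 𝒜 S (Eᶜ.indicator f) ≤ l), μ E

/-- The outer `L^{p,∞}_μ(S)` quasi-norm (weak type), `p ∈ (0,∞)` real. -/
noncomputable def outWeak (μ : MeasureTheory.OuterMeasure X) (𝒜 : Set (Set X))
    (S : (X → ℝ≥0∞) → Set X → ℝ≥0∞) (p : ℝ) (f : X → ℝ≥0∞) : ℝ≥0∞ :=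
  ⨆ (l : ℝ≥0∞) (_ : 0 < l), l * (slm μ 𝒜 S f l) ^ (1/p)

/-- The outer Lorentz `L^{p,q}_μ(S)` quasi-norm, `p, q ∈ (0,∞)` real. -/
noncomputable def outLorentz (μ : MeasureTheory.OuterMeasure X) (𝒜 : Set (Set X))
    (S : (X → ℝ≥0∞) → Set X → ℝ≥0∞) (p q : ℝ) (f : X → ℝ≥0∞) : ℝ≥0∞ :=
  ENNReal.ofReal p ^ (1/q) *
    (∫⁻ t in Set.Ioi (0:ℝ),
      (ENNReal.ofReal t * (slm μ 𝒜 S f (ENNReal.ofReal t)) ^ (1/p)) ^ q *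
        (ENNReal.ofReal t)⁻¹) ^ (1/q)

/-- The outer Lorentz `L^{p,q}_μ(S)` quasi-norm for `p, q ∈ (0,∞]`. -/
noncomputable def outLpq (μ : MeasureTheory.OuterMeasure X) (𝒜 : Set (Set X))
    (S : (X → ℝ≥0∞) → Set X → ℝ≥0∞) (p q : ℝ≥0∞) (f : X → ℝ≥0∞) : ℝ≥0∞ :=
  if p = ∞ then outLinf 𝒜 S f
  else if q = ∞ then outWeak μ 𝒜 S p.toReal f
  else outLorentz μ 𝒜 S p.toReal q.toReal f

/-- The size `S_r(f)(A) = (S(|f|^r)(A))^{1/r}` for `r ∈ (0,∞)`. -/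
noncomputable def sizeR (S : (X → ℝ≥0∞) → Set X → ℝ≥0∞) (r : ℝ)
    (f : X → ℝ≥0∞) (A : Set X) : ℝ≥0∞ :=
  (S (fun x => f x ^ r) A) ^ (1/r)

/-- `S_r` for `r ∈ (0,∞]`; for `r = ∞` defined via the limit (as a limsup). -/
noncomputable def sizeRE (S : (X → ℝ≥0∞) → Set X → ℝ≥0∞) (r : ℝ≥0∞)
    (f : X → ℝ≥0∞) (A : Set X) : ℝ≥0∞ :=
  if r = ∞ then Filter.limsup (fun s : ℝ => sizeR S s f A) Filter.atTop
  else sizeR S r.toReal f A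

/-! Call a good set `A` heavy at level `l` if `∫_A f^r ≥ 2 l^r μ(A)`; it is heavy as soon as
`ℓ^r_ω(f)(A) > 2^{1/r} l`. Let `R` be the supremum of the normalized weak norms and suppose `A`
is heavy at a finite level `l > 4R`. Then the super level measure of `f 1_A` at level `l` is
below `μ(A)/4`: outside a set `E` with `μ(E) < μ(A)/4` every average of `f^r` is at most `l^r`,
so `A \ E` carries at most `l^r μ(A)` of the integral and `A ∩ E` is again heavy. Iterating
gives heavy sets `A_n` with `μ(A_n) ≤ 4^{-n} μ(A)`; what they leave of `A` in the limit is
`μ`-null, hence `ω`-null, so `∫_A f^r ≤ ∑ l^r 4^{-n} μ(A) = (4/3) l^r μ(A) < 2 l^r μ(A)`, a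
contradiction. Hence `ℓ^r_ω(f)(A) ≤ 2^{1/r} · 4R`. -/

theorem exists_seq_of_forall_exists {α : Type*} {P : α → Prop} {Q : α → α → Prop}
    (h : ∀ a, P a → ∃ b, P b ∧ Q a b) {a₀ : α} (h₀ : P a₀) :
    ∃ s : ℕ → α, s 0 = a₀ ∧ ∀ n, Q (s n) (s (n + 1)) := by
  choose! next hnextP hnextQ using h
  have hP : ∀ n, P (next^[n] a₀) := fun n => by
    induction n with
    | zero => exact h₀
    | succ n ih => rw [Function.iterate_succ_apply']; exact hnextP _ ih
  refine ⟨fun n => next^[n] a₀, rfl, fun n => ?_⟩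
  simpa only [Function.iterate_succ_apply'] using hnextQ _ (hP n)

theorem subset_iInter_union_iUnion_diff_succ {α : Type*} (A : ℕ → Set α) :
    A 0 ⊆ (⋂ n, A n) ∪ ⋃ n, A n \ A (n + 1) := by
  intro x hx
  by_contra hcon
  simp only [mem_union, mem_iInter, mem_iUnion, Set.mem_sdiff, not_or, not_exists, not_and,
    not_not] at hcon
  exact hcon.1 fun n => Nat.rec hx (fun n ih => hcon.2 n ih) n

theorem setLIntegral_le_tsum_diff_succ {ω : Measure X} (g : X → ℝ≥0∞) (A : ℕ → Set X)
    (hA : ω (⋂ n, A n) = 0) :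
    ∫⁻ x in A 0, g x ∂ω ≤ ∑' n, ∫⁻ x in A n \ A (n + 1), g x ∂ω :=
  calc ∫⁻ x in A 0, g x ∂ω
      ≤ ∫⁻ x in (⋂ n, A n) ∪ ⋃ n, A n \ A (n + 1), g x ∂ω :=
        lintegral_mono_set (subset_iInter_union_iUnion_diff_succ A)
    _ ≤ (∫⁻ x in ⋂ n, A n, g x ∂ω) + ∫⁻ x in ⋃ n, A n \ A (n + 1), g x ∂ω :=
        lintegral_union_le _ _ _
    _ ≤ ∑' n, ∫⁻ x in A n \ A (n + 1), g x ∂ω := by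
        rw [setLIntegral_measure_zero _ _ hA, zero_add]
        exact lintegral_iUnion_le _ _

theorem tsum_inv_four_pow_lt_two : ∑' n : ℕ, (4⁻¹ : ℝ≥0∞) ^ n < 2 := by
  have h4 : (4 : ℝ≥0∞)⁻¹ = ENNReal.ofReal (1 / 4) := by
    norm_num [ENNReal.ofReal_div_of_pos]
  have h2 : (2 : ℝ≥0∞)⁻¹ = ENNReal.ofReal (1 / 2) := by
    norm_num [ENNReal.ofReal_div_of_pos]
  rw [ENNReal.tsum_geometric, ENNReal.inv_lt_iff_inv_lt, h4, h2, ← ENNReal.ofReal_one,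
    ← ENNReal.ofReal_sub _ (by norm_num), ENNReal.ofReal_lt_ofReal_iff (by norm_num)]
  norm_num

noncomputable def normalizedWeakSup (μ : OuterMeasure X) (ω : Measure X) (r : ℝ)
    (f : X → ℝ≥0∞) : ℝ≥0∞ :=
  ⨆ A ∈ goodSets μ, (μ A)⁻¹ * outWeak μ (goodSets μ) (ellr μ ω r) 1 (A.indicator f)

def IsHeavy (μ : OuterMeasure X) (ω : Measure X) (r : ℝ) (f : X → ℝ≥0∞) (l : ℝ≥0∞)
    (A : Set X) : Prop :=
  A ∈ goodSets μ ∧ 2 * l ^ r * μ A ≤ ∫⁻ x in A, f x ^ r ∂ω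

section Heavy

variable {μ : OuterMeasure X} {ω : Measure X} {r : ℝ} {l : ℝ≥0∞} {f g : X → ℝ≥0∞}
  {A D : Set X}

theorem ellr_eq_rpow_div (hr : 0 ≤ r) :
    ellr μ ω r g A = ((∫⁻ x in A, g x ^ r ∂ω) / μ A) ^ (1 / r) := by
  rw [ellr, ENNReal.rpow_neg, ← ENNReal.inv_rpow,
    ← ENNReal.mul_rpow_of_nonneg _ _ (by positivity), mul_comm, ← div_eq_mul_inv]

theorem ellr_le_iff (hr : 0 < r) (hA : A ∈ goodSets μ) :
    ellr μ ω r g A ≤ l ↔ ∫⁻ x in A, g x ^ r ∂ω ≤ l ^ r * μ A := by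
  rw [ellr_eq_rpow_div hr.le, one_div, ENNReal.rpow_inv_le_iff hr,
    ENNReal.div_le_iff hA.2.1 hA.2.2]

theorem setLIntegral_rpow_le_of_outLinf_le (hac : ∀ A : Set X, μ A = 0 → ω A = 0)
    (hr : 0 < r) (hg : outLinf (goodSets μ) (ellr μ ω r) g ≤ l) (hD : MeasurableSet D)
    (hDfin : μ D ≠ ∞) :
    ∫⁻ x in D, g x ^ r ∂ω ≤ l ^ r * μ D := by
  by_cases hD0 : μ D = 0
  · simp [setLIntegral_measure_zero _ _ (hac D hD0)]
  · have hDgood : D ∈ goodSets μ := ⟨hD, hD0, hDfin⟩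
    exact (ellr_le_iff hr hDgood).1
      ((le_iSup₂ (f := fun B (_ : B ∈ goodSets μ) => ellr μ ω r g B) D hDgood).trans hg)

theorem mul_slm_le_outWeak {𝒜 : Set (Set X)} {S : (X → ℝ≥0∞) → Set X → ℝ≥0∞} (hl : l ≠ 0) :
    l * slm μ 𝒜 S g l ≤ outWeak μ 𝒜 S 1 g := by
  simpa [outWeak] using le_iSup₂
    (f := fun l' (_ : 0 < l') => l' * slm μ 𝒜 S g l' ^ (1 / (1 : ℝ))) l (pos_iff_ne_zero.2 hl)

theorem outWeak_indicator_le (hA : A ∈ goodSets μ) :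
    outWeak μ (goodSets μ) (ellr μ ω r) 1 (A.indicator f) ≤
      μ A * normalizedWeakSup μ ω r f :=
  calc outWeak μ (goodSets μ) (ellr μ ω r) 1 (A.indicator f)
      = μ A * ((μ A)⁻¹ * outWeak μ (goodSets μ) (ellr μ ω r) 1 (A.indicator f)) := by
        rw [← mul_assoc, ENNReal.mul_inv_cancel hA.2.1 hA.2.2, one_mul]
    _ ≤ μ A * normalizedWeakSup μ ω r f :=
        mul_le_mul_right (le_iSup₂ (f := fun B (_ : B ∈ goodSets μ) =>
          (μ B)⁻¹ * outWeak μ (goodSets μ) (ellr μ ω r) 1 (B.indicator f)) A hA) _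

theorem slm_indicator_lt (hA : A ∈ goodSets μ) (hl : l ≠ ∞)
    (hR : 4 * normalizedWeakSup μ ω r f < l) :
    slm μ (goodSets μ) (ellr μ ω r) (A.indicator f) l < μ A / 4 := by
  have hl0 : l ≠ 0 := (zero_le.trans_lt hR).ne'
  have hR' : normalizedWeakSup μ ω r f < l / 4 := by
    rwa [ENNReal.lt_div_iff_mul_lt (by simp) (by simp), mul_comm]
  refine (ENNReal.mul_lt_mul_iff_right hl0 hl).1 ?_
  calc l * slm μ (goodSets μ) (ellr μ ω r) (A.indicator f) l
      ≤ μ A * normalizedWeakSup μ ω r f :=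
        (mul_slm_le_outWeak hl0).trans (outWeak_indicator_le hA)
    _ < μ A * (l / 4) := (ENNReal.mul_lt_mul_iff_right hA.2.1 hA.2.2).2 hR'
    _ = l * (μ A / 4) := by simp only [div_eq_mul_inv]; ring

theorem exists_isHeavy_of_slm_lt (hac : ∀ A : Set X, μ A = 0 → ω A = 0) (hr : 0 < r)
    (hl0 : l ≠ 0) (hl : l ≠ ∞) (hA : IsHeavy μ ω r f l A)
    (hslm : slm μ (goodSets μ) (ellr μ ω r) (A.indicator f) l < μ A / 4) :
    ∃ B, IsHeavy μ ω r f l B ∧ μ B ≤ μ A / 4 ∧ ∫⁻ x in A \ B, f x ^ r ∂ω ≤ l ^ r * μ A := by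
  obtain ⟨⟨hAm, hA0, hAfin⟩, hheavy⟩ := hA
  obtain ⟨E, hE, hEl, hEμ⟩ : ∃ E, MeasurableSet E ∧
      outLinf (goodSets μ) (ellr μ ω r) (Eᶜ.indicator (A.indicator f)) ≤ l ∧
        μ E < μ A / 4 := by
    simpa only [slm, iInf_lt_iff, exists_prop] using hslm
  have hdiff : ∫⁻ x in A \ E, f x ^ r ∂ω ≤ l ^ r * μ A :=
    calc ∫⁻ x in A \ E, f x ^ r ∂ω
        = ∫⁻ x in A \ E, Eᶜ.indicator (A.indicator f) x ^ r ∂ω :=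
          setLIntegral_congr_fun (hAm.diff hE) fun x hx => by
            rw [indicator_of_mem (show x ∈ Eᶜ from hx.2), indicator_of_mem hx.1]
      _ ≤ l ^ r * μ (A \ E) := setLIntegral_rpow_le_of_outLinf_le hac hr hEl (hAm.diff hE)
          (ne_top_of_le_ne_top hAfin (μ.mono sdiff_subset))
      _ ≤ l ^ r * μ A := mul_le_mul_right (μ.mono sdiff_subset) _
  have hlr : l ^ r * μ A ≠ ∞ := mul_ne_top (rpow_ne_top_of_nonneg hr.le hl) hAfin
  have hinter : l ^ r * μ A ≤ ∫⁻ x in A ∩ E, f x ^ r ∂ω := by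
    refine ENNReal.le_of_add_le_add_right hlr ?_
    calc l ^ r * μ A + l ^ r * μ A = 2 * l ^ r * μ A := by ring
      _ ≤ ∫⁻ x in A, f x ^ r ∂ω := hheavy
      _ = (∫⁻ x in A ∩ E, f x ^ r ∂ω) + ∫⁻ x in A \ E, f x ^ r ∂ω :=
          (lintegral_inter_add_sdiff _ A hE).symm
      _ ≤ (∫⁻ x in A ∩ E, f x ^ r ∂ω) + l ^ r * μ A := add_le_add_right hdiff _
  have hμ : μ (A ∩ E) ≤ μ A / 4 := ((μ.mono inter_subset_right).trans_lt hEμ).le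
  have hinter0 : μ (A ∩ E) ≠ 0 := fun h0 => by
    have := hinter.trans_eq (setLIntegral_measure_zero _ _ (hac _ h0))
    exact mul_ne_zero (rpow_pos (pos_iff_ne_zero.2 hl0) hl).ne' hA0 (le_zero_iff.1 this)
  have hinterGood : A ∩ E ∈ goodSets μ :=
    ⟨hAm.inter hE, hinter0, ne_top_of_le_ne_top hAfin (μ.mono inter_subset_left)⟩
  refine ⟨A ∩ E, ⟨hinterGood, ?_⟩, hμ, by rwa [sdiff_self_inter]⟩
  have hμ2 : μ (A ∩ E) ≤ μ A / 2 :=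
    hμ.trans (ENNReal.div_le_div_left (by norm_num : (2 : ℝ≥0∞) ≤ 4) _)
  calc 2 * l ^ r * μ (A ∩ E) ≤ 2 * l ^ r * (μ A / 2) := mul_le_mul_right hμ2 _
    _ = l ^ r * μ A := by
        rw [mul_comm 2, mul_assoc, ENNReal.mul_div_cancel two_ne_zero ofNat_ne_top]
    _ ≤ ∫⁻ x in A ∩ E, f x ^ r ∂ω := hinter

theorem le_four_mul_normalizedWeakSup (hac : ∀ A : Set X, μ A = 0 → ω A = 0) (hr : 0 < r)
    (hl : l ≠ ∞) (hA : IsHeavy μ ω r f l A) :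
    l ≤ 4 * normalizedWeakSup μ ω r f := by
  by_contra! hR
  have hl0 : l ≠ 0 := (zero_le.trans_lt hR).ne'
  obtain ⟨s, rfl, hs⟩ := exists_seq_of_forall_exists (fun B hB =>
    exists_isHeavy_of_slm_lt hac hr hl0 hl hB (slm_indicator_lt hB.1 hl hR)) hA
  have hμs : ∀ n, μ (s n) ≤ 4⁻¹ ^ n * μ (s 0) := fun n => by
    induction n with
    | zero => simp
    | succ n ih =>
      calc μ (s (n + 1)) ≤ μ (s n) / 4 := (hs n).1
        _ ≤ 4⁻¹ ^ n * μ (s 0) / 4 := ENNReal.div_le_div_right ih 4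
        _ = 4⁻¹ ^ (n + 1) * μ (s 0) := by rw [div_eq_mul_inv, pow_succ]; ring
  have htend : Tendsto (fun n : ℕ => (4⁻¹ : ℝ≥0∞) ^ n * μ (s 0)) atTop (nhds 0) := by
    simpa using ENNReal.Tendsto.mul_const
      (ENNReal.tendsto_pow_atTop_nhds_zero_of_lt_one (by norm_num)) (Or.inr hA.1.2.2)
  have hnull : μ (⋂ n, s n) = 0 :=
    le_zero_iff.1 (ge_of_tendsto' htend fun n => (μ.mono (iInter_subset _ n)).trans (hμs n))
  have hlr0 : l ^ r * μ (s 0) ≠ 0 :=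
    mul_ne_zero (rpow_pos (pos_iff_ne_zero.2 hl0) hl).ne' hA.1.2.1
  have hlr : l ^ r * μ (s 0) ≠ ∞ := mul_ne_top (rpow_ne_top_of_nonneg hr.le hl) hA.1.2.2
  refine lt_irrefl (2 * l ^ r * μ (s 0)) ?_
  calc 2 * l ^ r * μ (s 0)
      ≤ ∫⁻ x in s 0, f x ^ r ∂ω := hA.2
    _ ≤ ∑' n, ∫⁻ x in s n \ s (n + 1), f x ^ r ∂ω :=
        setLIntegral_le_tsum_diff_succ _ s (hac _ hnull)
    _ ≤ ∑' n : ℕ, l ^ r * μ (s 0) * 4⁻¹ ^ n := ENNReal.tsum_le_tsum fun n =>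
        (hs n).2.trans (by rw [mul_assoc, mul_comm (μ (s 0))]; exact mul_le_mul_right (hμs n) _)
    _ = l ^ r * μ (s 0) * ∑' n : ℕ, (4⁻¹ : ℝ≥0∞) ^ n := ENNReal.tsum_mul_left
    _ < l ^ r * μ (s 0) * 2 :=
        (ENNReal.mul_lt_mul_iff_right hlr0 hlr).2 tsum_inv_four_pow_lt_two
    _ = 2 * l ^ r * μ (s 0) := by ring

theorem isHeavy_div_of_lt_ellr (hr : 0 < r) (hA : A ∈ goodSets μ) {c : ℝ≥0∞}
    (hc : c < ellr μ ω r f A) : IsHeavy μ ω r f (c / 2 ^ (1 / r)) A := by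
  refine ⟨hA, ?_⟩
  calc 2 * (c / 2 ^ (1 / r)) ^ r * μ A = c ^ r * μ A := by
        rw [ENNReal.div_rpow_of_nonneg _ _ hr.le, one_div, ENNReal.rpow_inv_rpow hr.ne',
          ENNReal.mul_div_cancel two_ne_zero ofNat_ne_top]
    _ ≤ ∫⁻ x in A, f x ^ r ∂ω := (not_le.1 fun h => hc.not_ge ((ellr_le_iff hr hA).2 h)).le

end Heavy

theorem stmt13_general (p : ℝ≥0∞) (r : ℝ) (hr : 0 < r) :
    ∃ C : ℝ≥0∞, 1 ≤ C ∧ C ≠ ∞ ∧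
      ∀ (X : Type) [MeasurableSpace X] (μ : MeasureTheory.OuterMeasure X)
        (ω : MeasureTheory.Measure X), SigmaFiniteSetting μ ω →
        ∀ f : X → ℝ≥0∞,
          outLpq μ (goodSets μ) (ellr μ ω r) p ∞ f ≠ ∞ →
          ¬ (f =ᵐ[ω] 0) →
          outLinf (goodSets μ) (ellr μ ω r) f ≤
            C * ⨆ A ∈ goodSets μ, (μ A)⁻¹ *
              outWeak μ (goodSets μ) (ellr μ ω r) 1 (A.indicator f) := by
  have h2 : (2 : ℝ≥0∞) ^ (1 / r) ≠ 0 := (rpow_pos (by norm_num) ofNat_ne_top).ne'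
  have h2' : (2 : ℝ≥0∞) ^ (1 / r) ≠ ∞ := rpow_ne_top_of_nonneg (by positivity) ofNat_ne_top
  refine ⟨2 ^ (1 / r) * 4, (by norm_num : (1 : ℝ≥0∞) ≤ 4).trans
      (le_mul_of_one_le_left' (one_le_rpow one_le_two (by positivity))),
    mul_ne_top h2' ofNat_ne_top, fun X _ μ ω hS f _ _ => ?_⟩
  refine iSup₂_le fun A hA => le_of_forall_lt_imp_le_of_dense fun c hc => ?_
  have hl := le_four_mul_normalizedWeakSup hS.ac hr (div_ne_top hc.ne_top h2)
    (isHeavy_div_of_lt_ellr hr hA hc)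
  calc c = 2 ^ (1 / r) * (c / 2 ^ (1 / r)) := (ENNReal.mul_div_cancel h2 h2').symm
    _ ≤ 2 ^ (1 / r) * (4 * normalizedWeakSup μ ω r f) := mul_le_mul_right hl _
    _ = _ := (mul_assoc _ _ _).symm

/-- the outer `L^∞_μ(ℓ^r_ω)` norm is dominated by the supremum of
normalized `L^{1,∞}_μ(ℓ^r_ω)` pairings. -/
theorem stmt13 (p : ℝ≥0∞) (hp : 0 < p) (r : ℝ) (hr : 0 < r) :
    ∃ C : ℝ≥0∞, 1 ≤ C ∧ C ≠ ∞ ∧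
      ∀ (X : Type) [MeasurableSpace X] (μ : MeasureTheory.OuterMeasure X)
        (ω : MeasureTheory.Measure X), SigmaFiniteSetting μ ω →
        ∀ f : X → ℝ≥0∞,
          outLpq μ (goodSets μ) (ellr μ ω r) p ∞ f ≠ ∞ →
          ¬ (f =ᵐ[ω] 0) →
          outLinf (goodSets μ) (ellr μ ω r) f ≤
            C * ⨆ A ∈ goodSets μ, (μ A)⁻¹ *
              outWeak μ (goodSets μ) (ellr μ ω r) 1 (A.indicator f) :=
  stmt13_general p r hr
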